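/- (Monotonicity of the rejection probability, from the proof of Theorem 6 of the paper.) In the finite-sample Bernoulli testing framework, fix j ∈ {1, …, n} and fix p_i ∈ [0,1] for every i ≠ j. The map s ↦ Σ_{y ∈ {0,1}^n} φ̄(y)·s^{y_j}·(1 − s)^{1−y_j}·Π_{i ≠ j} p_i^{y_i}·(1 − p_i)^{1−y_i} on [0,1] is nondecreasing if p̃_j > 1/2, nonincreasing if p̃_j < 1/2, and constant if p̃_j = 1/2. -/

import Mathlib

/-- Likelihood of the binary outcome vector `y` under Bernoulli probabilities `p`. -/
def lik {n : ℕ} (p : Fin n → ℝ) (y : Fin n → Bool) : ℝ :=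
  ∏ i, if y i then p i else 1 - p i

/-- Rejection probability of the (possibly randomized) test `φ` under `p`. -/
def rejProb {n : ℕ} (φ : (Fin n → Bool) → ℝ) (p : Fin n → ℝ) : ℝ :=
  ∑ y : Fin n → Bool, φ y * lik p y

/-- The set `N(b)` of Bernoulli probability vectors compatible with the null `β = b`. -/
def nullSet {n K : ℕ} (X : Fin n → Fin K → ℝ) (b : Fin K → ℝ) : Set (Fin n → ℝ) :=
  {p | (∀ i, p i ∈ Set.Icc (0 : ℝ) 1) ∧
    ∀ i, (0 ≤ (∑ j, X i j * b j) → 1/2 ≤ p i) ∧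
         ((∑ j, X i j * b j) ≤ 0 → p i ≤ 1/2)}

/-- The least favorable null probabilities `p̄` paired with alternative `p̃`. -/
noncomputable def pbar {n K : ℕ} (X : Fin n → Fin K → ℝ) (b : Fin K → ℝ)
    (pt : Fin n → ℝ) : Fin n → ℝ :=
  fun i => if (∑ j, X i j * b j) * (pt i - 1/2) < 0 ∨
      ((∑ j, X i j * b j) = 0 ∧ pt i < 1/2) then 1/2 else pt i

/-- The likelihood ratio test `φ̄` of `p̄` against `p̃`, with constant `k` and
randomization `ξ`. -/
noncomputable def lrt {n : ℕ} (pt pb : Fin n → ℝ) (k ξ : ℝ)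
    (y : Fin n → Bool) : ℝ :=
  if k * lik pb y < lik pt y then 1
  else if lik pt y = k * lik pb y then ξ else 0

/-!
The map `s ↦ F s` is affine: pairing each outcome `y` with the outcome that differs from it only
in coordinate `j`, twice its slope is `Σ_y (φ̄(y[j ↦ 1]) − φ̄(y[j ↦ 0])) · w(y)` with weights
`w(y) = Π_{i≠j} p_i^{y_i}(1−p_i)^{1−y_i} ≥ 0`. Flipping `y_j` from `0` to `1` multiplies the
likelihood ratio `L(y; p̃) / L(y; p̄)` by `p̃_j (1 − p̄_j) / ((1 − p̃_j) p̄_j)`, which is `≥ 1`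
exactly when `p̄_j ≤ p̃_j`; as `φ̄` is a nondecreasing function of that ratio, the slope has the
sign of `p̃_j − p̄_j`. Finally `p̄_j` is `1/2` or `p̃_j`, so it lies between `1/2` and `p̃_j`.
-/

open Finset Function

lemma mul_le_of_mul_le_mul_cross {a a' b b' k : ℝ} (ha : 0 < a) (ha' : 0 ≤ a') (hk : 0 ≤ k)
    (hab : a * b' ≤ a' * b) (h : k * b ≤ a) : k * b' ≤ a' :=
  le_of_mul_le_mul_left (by nlinarith) ha

lemma mul_lt_of_mul_le_mul_cross {a a' b b' k : ℝ} (ha : 0 < a) (ha' : 0 < a') (hk : 0 ≤ k)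
    (hab : a * b' ≤ a' * b) (h : k * b < a) : k * b' < a' :=
  lt_of_mul_lt_mul_left (by nlinarith) ha.le

lemma prod_erase_update_self {ι β : Type*} [DecidableEq ι] (s : Finset ι) (f : ι → β → ℝ)
    (y : ι → β) (j : ι) (c : β) :
    ∏ i ∈ s.erase j, f i (update y j c i) = ∏ i ∈ s.erase j, f i (y i) :=
  prod_congr rfl fun i hi => by rw [update_of_ne (ne_of_mem_erase hi)]

lemma prod_ite_nonneg {ι : Type*} (s : Finset ι) {q : ι → ℝ}
    (hq : ∀ i ∈ s, q i ∈ Set.Icc (0 : ℝ) 1) (y : ι → Bool) :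
    0 ≤ ∏ i ∈ s, if y i then q i else 1 - q i :=
  prod_nonneg fun i hi => by
    split_ifs <;> linarith [(hq i hi).1, (hq i hi).2]

lemma prod_ite_pos {ι : Type*} (s : Finset ι) {q : ι → ℝ}
    (hq : ∀ i ∈ s, q i ∈ Set.Ioo (0 : ℝ) 1) (y : ι → Bool) :
    0 < ∏ i ∈ s, if y i then q i else 1 - q i :=
  prod_pos fun i hi => by
    split_ifs <;> linarith [(hq i hi).1, (hq i hi).2]

section FlipCoordinate

variable {ι : Type*} [Fintype ι] [DecidableEq ι]

lemma two_mul_sum_eq_sum_update (g : (ι → Bool) → ℝ) (j : ι) :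
    2 * ∑ y, g y = ∑ y, (g (update y j true) + g (update y j false)) := by
  have hflip : Involutive fun y : ι → Bool => update y j (!y j) := fun y => by simp
  have hsum : ∑ y, g (update y j (!y j)) = ∑ y, g y := by
    simpa using Equiv.sum_comp hflip.toPerm g
  rw [two_mul]
  nth_rw 2 [← hsum]
  rw [← sum_add_distrib]
  refine sum_congr rfl fun y _ => ?_
  have hy : update y j (y j) = y := update_eq_self j y
  cases h : y j <;> rw [h] at hy <;> simp [hy, add_comm]

variable {φ w : (ι → Bool) → ℝ} {j : ι}

lemma monotone_sum_mul_ite_mul (hw : ∀ y c, w (update y j c) = w y) (hw0 : ∀ y, 0 ≤ w y)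
    (hφ : ∀ y, φ (update y j false) ≤ φ (update y j true)) :
    Monotone fun s : ℝ => ∑ y, φ y * (if y j then s else 1 - s) * w y := by
  have affine : ∀ s : ℝ, 2 * ∑ y, φ y * (if y j then s else 1 - s) * w y =
      ∑ y, (φ (update y j false) + s * (φ (update y j true) - φ (update y j false))) * w y := by
    intro s
    rw [two_mul_sum_eq_sum_update _ j]
    refine sum_congr rfl fun y _ => ?_
    simp only [update_self, hw, if_true, Bool.false_eq_true, if_false]
    ring
  intro s t hst
  have : 2 * ∑ y, φ y * (if y j then s else 1 - s) * w y ≤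
      2 * ∑ y, φ y * (if y j then t else 1 - t) * w y := by
    rw [affine, affine]
    gcongr with y
    · exact hw0 y
    · exact sub_nonneg.2 (hφ y)
  linarith

lemma antitone_sum_mul_ite_mul (hw : ∀ y c, w (update y j c) = w y) (hw0 : ∀ y, 0 ≤ w y)
    (hφ : ∀ y, φ (update y j true) ≤ φ (update y j false)) :
    Antitone fun s : ℝ => ∑ y, φ y * (if y j then s else 1 - s) * w y := by
  intro s t hst
  have := monotone_sum_mul_ite_mul (φ := fun y => -φ y) hw hw0 (fun y => neg_le_neg (hφ y)) hst
  simpa only [neg_mul, sum_neg_distrib, neg_le_neg_iff] using this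

end FlipCoordinate

section LikelihoodRatioTest

variable {n : ℕ} {pt pb : Fin n → ℝ} {k ξ : ℝ}

lemma lrt_le_lrt (hk : 0 ≤ k) (hξ : ξ ∈ Set.Icc (0 : ℝ) 1) {y y' : Fin n → Bool}
    (hy : 0 < lik pt y) (hy' : 0 < lik pt y')
    (hratio : lik pt y * lik pb y' ≤ lik pt y' * lik pb y) :
    lrt pt pb k ξ y ≤ lrt pt pb k ξ y' := by
  have hlt := mul_lt_of_mul_le_mul_cross hy hy' hk hratio
  have hle := mul_le_of_mul_le_mul_cross hy hy'.le hk hratio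
  unfold lrt
  split_ifs <;> grind

lemma lik_update (q : Fin n → ℝ) (y : Fin n → Bool) (j : Fin n) (c : Bool) :
    lik q (update y j c) =
      (if c then q j else 1 - q j) * ∏ i ∈ univ.erase j, if y i then q i else 1 - q i := by
  rw [lik, ← mul_prod_erase _ _ (mem_univ j), update_self]
  congr 1
  exact prod_erase_update_self _ (fun i c => if c then q i else 1 - q i) y j c

lemma lrt_update_le_update (hpt : ∀ i, pt i ∈ Set.Ioo (0 : ℝ) 1)
    (hpb : ∀ i, pb i ∈ Set.Icc (0 : ℝ) 1) (hk : 0 ≤ k) (hξ : ξ ∈ Set.Icc (0 : ℝ) 1)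
    {j : Fin n} {c c' : Bool}
    (hj : (if c then pt j else 1 - pt j) * (if c' then pb j else 1 - pb j) ≤
      (if c' then pt j else 1 - pt j) * (if c then pb j else 1 - pb j))
    (y : Fin n → Bool) :
    lrt pt pb k ξ (update y j c) ≤ lrt pt pb k ξ (update y j c') := by
  have hR := mul_nonneg (prod_ite_pos (univ.erase j) (fun i _ => hpt i) y).le
    (prod_ite_nonneg (univ.erase j) (fun i _ => hpb i) y)
  refine lrt_le_lrt hk hξ (prod_ite_pos _ (fun i _ => hpt i) _)
    (prod_ite_pos _ (fun i _ => hpt i) _) ?_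
  rw [lik_update, lik_update, lik_update, lik_update]
  nlinarith [mul_le_mul_of_nonneg_right hj hR]

lemma lrt_update_false_le_true (hpt : ∀ i, pt i ∈ Set.Ioo (0 : ℝ) 1)
    (hpb : ∀ i, pb i ∈ Set.Icc (0 : ℝ) 1) (hk : 0 ≤ k) (hξ : ξ ∈ Set.Icc (0 : ℝ) 1) {j : Fin n}
    (hj : pb j ≤ pt j) (y : Fin n → Bool) :
    lrt pt pb k ξ (update y j false) ≤ lrt pt pb k ξ (update y j true) :=
  lrt_update_le_update hpt hpb hk hξ
    (by simp only [if_true, Bool.false_eq_true, if_false]; nlinarith) y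

lemma lrt_update_true_le_false (hpt : ∀ i, pt i ∈ Set.Ioo (0 : ℝ) 1)
    (hpb : ∀ i, pb i ∈ Set.Icc (0 : ℝ) 1) (hk : 0 ≤ k) (hξ : ξ ∈ Set.Icc (0 : ℝ) 1) {j : Fin n}
    (hj : pt j ≤ pb j) (y : Fin n → Bool) :
    lrt pt pb k ξ (update y j true) ≤ lrt pt pb k ξ (update y j false) :=
  lrt_update_le_update hpt hpb hk hξ
    (by simp only [if_true, Bool.false_eq_true, if_false]; nlinarith) y

end LikelihoodRatioTest

lemma pbar_eq_half_or_eq {n K : ℕ} (X : Fin n → Fin K → ℝ) (b : Fin K → ℝ) (pt : Fin n → ℝ)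
    (i : Fin n) : pbar X b pt i = 1 / 2 ∨ pbar X b pt i = pt i := by
  unfold pbar
  split_ifs
  exacts [Or.inl rfl, Or.inr rfl]

lemma pbar_mem_Icc {n K : ℕ} (X : Fin n → Fin K → ℝ) (b : Fin K → ℝ) {pt : Fin n → ℝ}
    (hpt : ∀ i, pt i ∈ Set.Ioo (0 : ℝ) 1) (i : Fin n) : pbar X b pt i ∈ Set.Icc (0 : ℝ) 1 := by
  rcases pbar_eq_half_or_eq X b pt i with h | h <;> rw [h]
  · norm_num
  · exact Set.Ioo_subset_Icc_self (hpt i)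

theorem theorem6_monotone_step_general
    {n K : ℕ}
    (X : Fin n → Fin K → ℝ) (b : Fin K → ℝ)
    (pt : Fin n → ℝ) (hpt : ∀ i, pt i ∈ Set.Ioo (0 : ℝ) 1)
    (k ξ : ℝ) (hk : 0 ≤ k) (hξ : ξ ∈ Set.Icc (0 : ℝ) 1)
    (j : Fin n) (p : Fin n → ℝ) (hp : ∀ i, i ≠ j → p i ∈ Set.Icc (0 : ℝ) 1)
    (F : ℝ → ℝ)
    (hF : ∀ s, F s = ∑ y : Fin n → Bool,
      lrt pt (pbar X b pt) k ξ y * (if y j then s else 1 - s) *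
        ∏ i ∈ Finset.univ.erase j, (if y i then p i else 1 - p i)) :
    (1/2 < pt j → MonotoneOn F (Set.Icc (0 : ℝ) 1)) ∧
    (pt j < 1/2 → AntitoneOn F (Set.Icc (0 : ℝ) 1)) ∧
    (pt j = 1/2 → ∀ s ∈ Set.Icc (0 : ℝ) 1, ∀ s' ∈ Set.Icc (0 : ℝ) 1, F s = F s') := by
  obtain rfl := funext hF
  have hpb := pbar_mem_Icc X b hpt
  have hw (y : Fin n → Bool) (c : Bool) := prod_erase_update_self univ
    (fun i c => if c then p i else 1 - p i) y j c
  have hw0 := prod_ite_nonneg (univ.erase j) (fun i hi => hp i (ne_of_mem_erase hi))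
  have mono (h : pbar X b pt j ≤ pt j) :=
    monotone_sum_mul_ite_mul (φ := lrt pt (pbar X b pt) k ξ) hw hw0
      (lrt_update_false_le_true hpt hpb hk hξ h)
  have anti (h : pt j ≤ pbar X b pt j) :=
    antitone_sum_mul_ite_mul (φ := lrt pt (pbar X b pt) k ξ) hw hw0
      (lrt_update_true_le_false hpt hpb hk hξ h)
  have hpbj := pbar_eq_half_or_eq X b pt j
  refine ⟨fun h => (mono ?_).monotoneOn _, fun h => (anti ?_).antitoneOn _, fun h s _ s' _ => ?_⟩
  · rcases hpbj with e | e <;> linarith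
  · rcases hpbj with e | e <;> linarith
  have e : pbar X b pt j = pt j := by rcases hpbj with e | e <;> linarith
  rcases le_total s s' with hs | hs
  exacts [le_antisymm (mono e.le hs) (anti e.ge hs), le_antisymm (anti e.ge hs) (mono e.le hs)]

/-- Monotonicity of the rejection probability in each null coordinate, from the proof
of Theorem 6: the map `s ↦ Σ_y φ̄(y)·s^{y_j}(1−s)^{1−y_j}·Π_{i≠j} p_i^{y_i}(1−p_i)^{1−y_i}`
on `[0,1]` is nondecreasing if `p̃_j > 1/2`, nonincreasing if `p̃_j < 1/2`, and constant
if `p̃_j = 1/2`. -/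
theorem theorem6_monotone_step
    {n K : ℕ} (hn : 1 ≤ n)
    (X : Fin n → Fin K → ℝ) (b : Fin K → ℝ)
    (pt : Fin n → ℝ) (hpt : ∀ i, pt i ∈ Set.Ioo (0 : ℝ) 1)
    (α : ℝ) (hα : α ∈ Set.Ioo (0 : ℝ) 1)
    (k ξ : ℝ) (hk : 0 ≤ k) (hξ : ξ ∈ Set.Icc (0 : ℝ) 1)
    (j : Fin n) (p : Fin n → ℝ) (hp : ∀ i, i ≠ j → p i ∈ Set.Icc (0 : ℝ) 1)
    (F : ℝ → ℝ)
    (hF : ∀ s, F s = ∑ y : Fin n → Bool,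
      lrt pt (pbar X b pt) k ξ y * (if y j then s else 1 - s) *
        ∏ i ∈ Finset.univ.erase j, (if y i then p i else 1 - p i)) :
    (1/2 < pt j → MonotoneOn F (Set.Icc (0 : ℝ) 1)) ∧
    (pt j < 1/2 → AntitoneOn F (Set.Icc (0 : ℝ) 1)) ∧
    (pt j = 1/2 → ∀ s ∈ Set.Icc (0 : ℝ) 1, ∀ s' ∈ Set.Icc (0 : ℝ) 1, F s = F s') :=
  theorem6_monotone_step_general X b pt hpt k ξ hk hξ j p hp F hF
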